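/- arXiv:2306.09293 — 5 statements merged into one kernel-verified Lean document; each statement's English description precedes it below -/
import Mathlib

section
/- Suppose for every layer l and node p, the weighted sum over active nodes satisfies Σ_{i∈↑^l_p} a^{l-1}_i W^l_{i,p} = c · Σ_{i∉↑^l_p} a^{l-1}_i W^l_{i,p} for a fixed constant c > 0. Then the exact activation satisfies a^k_j = ā^k_j · ((c+1)/c)^k, so the error e^k_j = ā^k_j · (((c+1)/c)^k − 1) grows exponentially in the depth k. -/
/-! On every layer the inactive nodes contribute `1/c` times what the active ones do, so the exact
activation is `(c + 1) / c` times the sum over the active nodes alone. By induction on the depth,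
the activations entering that sum are `((c + 1) / c) ^ k` times their estimates, so the sum itself
is `((c + 1) / c) ^ k` times the next estimate. -/

open Finset

theorem sum_eq_div_mul_sum_of_sum_eq_mul_sum_compl {ι K : Type*} [Fintype ι] [DecidableEq ι]
    [Field K] {s : Finset ι} {f : ι → K} {c : K} (hc : c ≠ 0)
    (h : ∑ i ∈ s, f i = c * ∑ i ∈ sᶜ, f i) :
    ∑ i, f i = (c + 1) / c * ∑ i ∈ s, f i := by
  rw [← sum_add_sum_compl s f, h]
  field_simp

/-- Paper's Theorem: under the constant active-to-inactive ratio assumption,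
the exact activation is `((c+1)/c)^k` times the estimate, so the error grows
exponentially with the depth `k`. -/
theorem exponential_error
    (n : ℕ) (x : Fin n → ℝ)
    (W : ℕ → Matrix (Fin n) (Fin n) ℝ)
    (up : ℕ → Fin n → Finset (Fin n))
    (a abar e : ℕ → Fin n → ℝ)
    (c : ℝ) (hc : 0 < c)
    (ha0 : ∀ j, a 0 j = x j)
    (ha : ∀ k j, a (k + 1) j = ∑ i, a k i * W (k + 1) i j)
    (hab0 : ∀ j, abar 0 j = x j)
    (hab : ∀ k j, abar (k + 1) j = ∑ i ∈ up (k + 1) j, abar k i * W (k + 1) i j)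
    (he : ∀ k j, e k j = a k j - abar k j)
    (hratio : ∀ k p, ∑ i ∈ up (k + 1) p, a k i * W (k + 1) i p
      = c * ∑ i ∈ (up (k + 1) p)ᶜ, a k i * W (k + 1) i p) :
    ∀ k j, a k j = abar k j * ((c + 1) / c) ^ k ∧
      e k j = abar k j * (((c + 1) / c) ^ k - 1) := by
  have ha_eq : ∀ k j, a k j = abar k j * ((c + 1) / c) ^ k := by
    intro k
    induction k with
    | zero => simp [ha0, hab0]
    | succ k ih =>
      intro j
      have hactive : ∑ i ∈ up (k + 1) j, a k i * W (k + 1) i j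
          = ((c + 1) / c) ^ k * abar (k + 1) j := by
        simp only [hab, mul_sum, ih]
        exact sum_congr rfl fun i _ ↦ by ring
      rw [ha, sum_eq_div_mul_sum_of_sum_eq_mul_sum_compl hc.ne' (hratio k j), hactive]
      ring
  intro k j
  exact ⟨ha_eq k j, by rw [he, ha_eq k j]; ring⟩
end

section
/- The expected squared Frobenius error E[‖AB − CR‖_F²] of the c-sample importance-sampling estimator CR = (1/c) Σ_{t=1}^c (1/p_{i_t}) A_{:,i_t} B_{i_t,:}, where indices i_t are i.i.d. with P(i_t = i) = p_i, is minimized over probability distributions (p_1,…,p_n) by p_i = ‖A_{:,i}‖‖B_{i,:}‖ / Σ_{t'} ‖A_{:,t'}‖‖B_{t',:}‖. -/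
/-! At `p = a / ∑ a` the weighted sum `∑ aᵢ² / pᵢ` equals `(∑ a)²`, and Cauchy–Schwarz applied to
`√pᵢ` and `aᵢ / √pᵢ` gives `(∑ a)² ≤ (∑ p) · ∑ aᵢ² / pᵢ` for every `p`. -/

open Finset

/-- Also when some `a i` or `T` vanishes, since then both sides of the termwise identity are `0`
under the convention `x / 0 = 0`. -/
theorem sum_sq_div_div_eq_mul_sum {ι K : Type*} [Field K] (s : Finset ι) (a : ι → K) (T : K) :
    ∑ i ∈ s, a i ^ 2 / (a i / T) = T * ∑ i ∈ s, a i := by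
  rw [mul_sum]
  refine sum_congr rfl fun i _ => ?_
  rw [div_div_eq_mul_div, sq, mul_div_right_comm, mul_self_div_self, mul_comm]

theorem sq_sum_le_sum_mul_sum_sq_div {ι K : Type*} [Field K] [LinearOrder K]
    [IsStrictOrderedRing K] (s : Finset ι) {a p : ι → K} (hp : ∀ i ∈ s, 0 ≤ p i)
    (hsupp : ∀ i ∈ s, p i = 0 → a i = 0) :
    (∑ i ∈ s, a i) ^ 2 ≤ (∑ i ∈ s, p i) * ∑ i ∈ s, a i ^ 2 / p i := by
  refine sum_sq_le_sum_mul_sum_of_sq_le_mul s hp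
    (fun i hi => div_nonneg (sq_nonneg _) (hp i hi)) fun i hi => ?_
  rcases eq_or_ne (p i) 0 with h | h
  · simp [h, hsupp i hi h]
  · rw [mul_div_cancel₀ _ h]

theorem optimal_distribution_minimizes_error_general (m n q c : ℕ)
    (A : Matrix (Fin m) (Fin n) ℝ) (B : Matrix (Fin n) (Fin q) ℝ)
    (a : Fin n → ℝ)
    (ha : ∀ i, a i = Real.sqrt (∑ r, A r i ^ 2) * Real.sqrt (∑ cc, B i cc ^ 2)) :
    ∀ p : Fin n → ℝ, (∀ i, 0 ≤ p i) → (∑ i, p i = 1) →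
      (∀ i, 0 < a i → 0 < p i) →
      (1 / c : ℝ) * ((∑ i, a i ^ 2 / (a i / ∑ t, a t)) - ∑ r, ∑ cc, (A * B) r cc ^ 2)
        ≤ (1 / c : ℝ) * ((∑ i, a i ^ 2 / p i) - ∑ r, ∑ cc, (A * B) r cc ^ 2) := by
  intro p hp hsum hpa
  have hsupp : ∀ i, p i = 0 → a i = 0 := fun i hpi => by
    have ha_nonneg : 0 ≤ a i := ha i ▸ by positivity
    by_contra hai
    exact (hpa i (ha_nonneg.lt_of_ne' hai)).ne' hpi
  refine mul_le_mul_of_nonneg_left (sub_le_sub_right ?_ _) (by positivity)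
  calc ∑ i, a i ^ 2 / (a i / ∑ t, a t) = (∑ i, a i) ^ 2 := by
        rw [sum_sq_div_div_eq_mul_sum, sq]
    _ ≤ (∑ i, p i) * ∑ i, a i ^ 2 / p i :=
        sq_sum_le_sum_mul_sum_sq_div _ (fun i _ => hp i) fun i _ => hsupp i
    _ = ∑ i, a i ^ 2 / p i := by rw [hsum, one_mul]

/-- The expected squared Frobenius error
`E[‖AB - CR‖_F²] = (1/c)(∑ i aᵢ²/pᵢ - ‖AB‖_F²)` of the `c`-sample
importance-sampling estimator is minimized over probability distributions by
`p i = aᵢ / ∑ j aⱼ`, where `aᵢ = ‖A_{:,i}‖ ‖B_{i,:}‖`. -/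
theorem optimal_distribution_minimizes_error (m n q c : ℕ) (hc : 1 ≤ c)
    (A : Matrix (Fin m) (Fin n) ℝ) (B : Matrix (Fin n) (Fin q) ℝ)
    (a : Fin n → ℝ)
    (ha : ∀ i, a i = Real.sqrt (∑ r, A r i ^ 2) * Real.sqrt (∑ cc, B i cc ^ 2))
    (hT : ∑ t, a t ≠ 0) :
    ∀ p : Fin n → ℝ, (∀ i, 0 ≤ p i) → (∑ i, p i = 1) →
      (∀ i, 0 < a i → 0 < p i) →
      (1 / c : ℝ) * ((∑ i, a i ^ 2 / (a i / ∑ t, a t)) - ∑ r, ∑ cc, (A * B) r cc ^ 2)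
        ≤ (1 / c : ℝ) * ((∑ i, a i ^ 2 / p i) - ∑ r, ∑ cc, (A * B) r cc ^ 2) :=
  optimal_distribution_minimizes_error_general m n q c A B a ha
end

section
/- For the asymmetric transformations P(w) = [w; ‖w‖^2, ‖w‖^4, …, ‖w‖^{2^m}] and Q(a) = [a; 1/2, …, 1/2], if ‖a‖ = 1 then ‖Q(a) − P(w)‖² = 1 + m/4 − 2⟨a, w⟩ + ‖w‖^{2^{m+1}}. -/
/-- The asymmetric transformation `P` appending `‖w‖^{2^1}, …, ‖w‖^{2^m}`. -/
noncomputable def Pmap (n m : ℕ) (w : EuclideanSpace ℝ (Fin n)) :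
    EuclideanSpace ℝ (Fin n ⊕ Fin m) :=
  WithLp.toLp 2 (Sum.elim w fun j => ‖w‖ ^ 2 ^ ((j : ℕ) + 1))

/-- The asymmetric transformation `Q` appending `m` copies of `1/2`. -/
noncomputable def Qmap (n m : ℕ) (a : EuclideanSpace ℝ (Fin n)) :
    EuclideanSpace ℝ (Fin n ⊕ Fin m) :=
  WithLp.toLp 2 (Sum.elim a fun _ => 1 / 2)

/-!
Squaring the difference coordinatewise, the first block gives `‖a - w‖² = 1 - 2⟨a, w⟩ + ‖w‖²`,
and the `j`-th appended coordinate gives `(1/2 - x)² = 1/4 + (x² - x)` with `x = ‖w‖^{2^j}`.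
Since `x²` is the next appended value, these terms telescope to `m/4 + ‖w‖^{2^{m+1}} - ‖w‖²`,
and the `‖w‖²` cancels.
-/

theorem EuclideanSpace.norm_toLp_sumElim_sq {ι κ : Type*} [Fintype ι] [Fintype κ]
    (x : EuclideanSpace ℝ ι) (y : κ → ℝ) :
    ‖WithLp.toLp 2 (Sum.elim x y)‖ ^ 2 = ‖x‖ ^ 2 + ∑ j, y j ^ 2 := by
  simp only [EuclideanSpace.norm_sq_eq, Fintype.sum_sum_type, Real.norm_eq_abs, sq_abs,
    Sum.elim_inl, Sum.elim_inr]

theorem norm_Qmap_sub_Pmap_sq (n m : ℕ) (a w : EuclideanSpace ℝ (Fin n)) :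
    ‖Qmap n m a - Pmap n m w‖ ^ 2
      = ‖a - w‖ ^ 2 + ∑ j : Fin m, (1 / 2 - ‖w‖ ^ 2 ^ ((j : ℕ) + 1)) ^ 2 := by
  have : Qmap n m a - Pmap n m w
      = WithLp.toLp 2 (Sum.elim (a - w) fun j : Fin m => 1 / 2 - ‖w‖ ^ 2 ^ ((j : ℕ) + 1)) := by
    ext (i | j) <;> rfl
  rw [this, EuclideanSpace.norm_toLp_sumElim_sq]

theorem sum_range_sq_half_sub_pow_two_pow (r : ℝ) (m : ℕ) :
    ∑ j ∈ Finset.range m, (1 / 2 - r ^ 2 ^ (j + 1)) ^ 2 = m / 4 - r ^ 2 + r ^ 2 ^ (m + 1) := by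
  have expand (j : ℕ) :
      (1 / 2 - r ^ 2 ^ (j + 1)) ^ 2 = 1 / 4 + (r ^ 2 ^ (j + 1 + 1) - r ^ 2 ^ (j + 1)) := by
    rw [pow_succ 2 (j + 1), pow_mul]
    ring
  rw [Finset.sum_congr rfl fun j _ => expand j, Finset.sum_add_distrib,
    Finset.sum_range_sub (fun j => r ^ 2 ^ (j + 1))]
  simp only [Finset.sum_const, Finset.card_range, nsmul_eq_mul]
  ring

/-- For `‖a‖ = 1`,
`‖Q(a) - P(w)‖² = 1 + m/4 - 2⟨a, w⟩ + ‖w‖^{2^{m+1}}`. -/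
theorem alsh_distance_identity (n m : ℕ)
    (a w : EuclideanSpace ℝ (Fin n)) (hna : ‖a‖ = 1) :
    ‖Qmap n m a - Pmap n m w‖ ^ 2
      = 1 + (m : ℝ) / 4 - 2 * (inner ℝ a w : ℝ) + ‖w‖ ^ 2 ^ (m + 1) := by
  rw [norm_Qmap_sub_Pmap_sq, norm_sub_sq_real, hna,
    Fin.sum_univ_eq_sum_range (fun j => (1 / 2 - ‖w‖ ^ 2 ^ (j + 1)) ^ 2),
    sum_range_sq_half_sub_pow_two_pow]
  ring
end

section
/- With ‖a‖ = 1 and ‖w‖ ≤ C < 1 for all candidate vectors w, as m → ∞ the term ‖w‖^{2^{m+1}} → 0 uniformly, so for sufficiently large m the minimizer of ‖Q(a) − P(w)‖ over a finite set S of vectors with pairwise distinct inner products ⟨a,w⟩ coincides with the maximizer of ⟨a, w⟩ over S, provided the gap between the largest and second-largest inner product exceeds C^{2^{m+1}}/2. -/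
/-!
Expanding the square, `‖Q(a) - P(w)‖² = ‖a‖² + m/4 - 2⟪a, w⟫ + ‖w‖^{2^{m+1}}`: the appended
coordinates contribute `∑ (1/2 - x_j)²` with `x_j = ‖w‖^{2^{j+1}}`, and since `x_j² = x_{j+1}`
the sum `∑ (x_j² - x_j)` telescopes, cancelling `‖w‖²` from `‖a - w‖²`. Hence, for a fixed
query `a`, comparing distances to `Q(a)` is comparing `⟪a, w⟫` up to the error
`‖w‖^{2^{m+1}} / 2 ≤ C^{2^{m+1}} / 2`, which tends to `0` doubly exponentially.
-/

open Finset Filter Topology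

theorem sum_range_sq_pow_two_pow_sub {R : Type*} [CommRing R] (x : R) (m : ℕ) :
    ∑ j ∈ range m, ((x ^ 2 ^ (j + 1)) ^ 2 - x ^ 2 ^ (j + 1)) = x ^ 2 ^ (m + 1) - x ^ 2 := by
  have hsq (j : ℕ) : (x ^ 2 ^ (j + 1)) ^ 2 = x ^ 2 ^ (j + 2) := by
    rw [← pow_mul, ← pow_succ]
  simp_rw [hsq]
  exact sum_range_sub (fun j => x ^ 2 ^ (j + 1)) m

theorem EuclideanSpace.norm_sq_toLp_sumElim {ι κ : Type*} [Fintype ι] [Fintype κ]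
    (u : EuclideanSpace ℝ ι) (v : κ → ℝ) :
    ‖(WithLp.toLp 2 (Sum.elim u v) : EuclideanSpace ℝ (ι ⊕ κ))‖ ^ 2 =
      ‖u‖ ^ 2 + ∑ j, v j ^ 2 := by
  simp [EuclideanSpace.norm_sq_eq, Fintype.sum_sum_type]

theorem Qmap_sub_Pmap (n m : ℕ) (a w : EuclideanSpace ℝ (Fin n)) :
    Qmap n m a - Pmap n m w =
      WithLp.toLp 2 (Sum.elim (a - w) fun j : Fin m => 1 / 2 - ‖w‖ ^ 2 ^ ((j : ℕ) + 1)) := by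
  ext (i | j) <;> rfl

theorem norm_sq_Qmap_sub_Pmap (n m : ℕ) (a w : EuclideanSpace ℝ (Fin n)) :
    ‖Qmap n m a - Pmap n m w‖ ^ 2 =
      ‖a‖ ^ 2 + m / 4 - 2 * inner ℝ a w + ‖w‖ ^ 2 ^ (m + 1) := by
  have hsum : ∑ j : Fin m, (1 / 2 - ‖w‖ ^ 2 ^ ((j : ℕ) + 1)) ^ 2 =
      m / 4 + ∑ j ∈ range m, ((‖w‖ ^ 2 ^ (j + 1)) ^ 2 - ‖w‖ ^ 2 ^ (j + 1)) := by
    have hsq (x : ℝ) : (1 / 2 - x) ^ 2 = 1 / 4 + (x ^ 2 - x) := by ring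
    rw [Fin.sum_univ_eq_sum_range (fun j => (1 / 2 - ‖w‖ ^ 2 ^ (j + 1)) ^ 2)]
    simp only [hsq, sum_add_distrib, sum_const, card_range, nsmul_eq_mul]
    ring
  rw [Qmap_sub_Pmap, EuclideanSpace.norm_sq_toLp_sumElim, hsum, sum_range_sq_pow_two_pow_sub,
    norm_sub_sq_real]
  ring

theorem norm_Qmap_sub_Pmap_lt_iff (n m : ℕ) (a w' w : EuclideanSpace ℝ (Fin n)) :
    ‖Qmap n m a - Pmap n m w'‖ < ‖Qmap n m a - Pmap n m w‖ ↔
      inner ℝ a w + (‖w'‖ ^ 2 ^ (m + 1) - ‖w‖ ^ 2 ^ (m + 1)) / 2 < inner ℝ a w' := by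
  rw [← sq_lt_sq₀ (norm_nonneg _) (norm_nonneg _), norm_sq_Qmap_sub_Pmap,
    norm_sq_Qmap_sub_Pmap]
  constructor <;> intro h <;> linarith

theorem tendsto_pow_two_pow_succ_nhds_zero {C : ℝ} (hC0 : 0 ≤ C) (hC1 : C < 1) :
    Tendsto (fun m : ℕ => C ^ 2 ^ (m + 1)) atTop (𝓝 0) :=
  (tendsto_pow_atTop_nhds_zero_of_lt_one hC0 hC1).comp <|
    (tendsto_pow_atTop_atTop_of_one_lt one_lt_two).comp (tendsto_add_atTop_nat 1)

theorem alsh_nns_solves_mips_general (n : ℕ) (C : ℝ) (hC0 : 0 ≤ C) (hC1 : C < 1)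
    (a : EuclideanSpace ℝ (Fin n))
    (S : Finset (EuclideanSpace ℝ (Fin n)))
    (hS : ∀ w ∈ S, ‖w‖ ≤ C) :
    Filter.Tendsto (fun m : ℕ => C ^ 2 ^ (m + 1)) Filter.atTop (nhds 0) ∧
    ∀ m : ℕ, ∀ wstar ∈ S,
      (∀ w ∈ S, w ≠ wstar →
        (inner ℝ a w : ℝ) + C ^ 2 ^ (m + 1) / 2 < (inner ℝ a wstar : ℝ)) →
      ∀ w ∈ S, w ≠ wstar →
        ‖Qmap n m a - Pmap n m wstar‖ < ‖Qmap n m a - Pmap n m w‖ := by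
  refine ⟨tendsto_pow_two_pow_succ_nhds_zero hC0 hC1, ?_⟩
  intro m wstar hwstar hgap w hw hne
  have hstar : ‖wstar‖ ^ 2 ^ (m + 1) ≤ C ^ 2 ^ (m + 1) :=
    pow_le_pow_left₀ (norm_nonneg _) (hS wstar hwstar) _
  have hw_nonneg : 0 ≤ ‖w‖ ^ 2 ^ (m + 1) := by positivity
  rw [norm_Qmap_sub_Pmap_lt_iff]
  linarith [hgap w hw hne]

/-- With `‖a‖ = 1` and `‖w‖ ≤ C < 1` for all `w ∈ S`, the term `C^{2^{m+1}}`
tends to `0` as `m → ∞`, and whenever the gap between the largest and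
second-largest inner product exceeds `C^{2^{m+1}} / 2`, the minimizer of
`‖Q(a) - P(w)‖` over `S` is the maximizer of `⟨a, w⟩` over `S`. -/
theorem alsh_nns_solves_mips (n : ℕ) (C : ℝ) (hC0 : 0 ≤ C) (hC1 : C < 1)
    (a : EuclideanSpace ℝ (Fin n)) (hna : ‖a‖ = 1)
    (S : Finset (EuclideanSpace ℝ (Fin n)))
    (hS : ∀ w ∈ S, ‖w‖ ≤ C)
    (hdist : ∀ w ∈ S, ∀ w' ∈ S, w ≠ w' → (inner ℝ a w : ℝ) ≠ (inner ℝ a w' : ℝ)) :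
    Filter.Tendsto (fun m : ℕ => C ^ 2 ^ (m + 1)) Filter.atTop (nhds 0) ∧
    ∀ m : ℕ, ∀ wstar ∈ S,
      (∀ w ∈ S, w ≠ wstar →
        (inner ℝ a w : ℝ) + C ^ 2 ^ (m + 1) / 2 < (inner ℝ a wstar : ℝ)) →
      ∀ w ∈ S, w ≠ wstar →
        ‖Qmap n m a - Pmap n m wstar‖ < ‖Qmap n m a - Pmap n m w‖ :=
  alsh_nns_solves_mips_general n C hC0 hC1 a S hS
end

section
/- For a random sign-projection hash h_v(x) = sign(⟨v, x⟩) with v drawn from a rotationally invariant distribution on ℝ^n, the collision probability of two nonzero vectors x, y is P[h_v(x) = h_v(y)] = 1 − θ(x,y)/π, where θ(x,y) is the angle between x and y. -/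
/-!
Write `x = ‖x‖ • e₁` and `y = ‖y‖ • (cos θ • e₁ + sin θ • e₂)` for an orthonormal pair `e₁, e₂`,
where `θ` is the angle between `x` and `y`. If `φ` is the argument of
`z = ⟪v, e₁⟫ + ⟪v, e₂⟫ i`, the two signs are those of `cos φ` and `cos (φ - θ)`. Rotations of the
plane spanned by `e₁, e₂` act on `z` by multiplication by `e^{iα}`, so rotation invariance makes
the law of `φ` a translation invariant probability measure on the circle, i.e. the normalised
Haar measure. The angles where the two cosines have the same sign form two arcs of total length
`2π - 2θ`.
-/

open MeasureTheory Measure Real Set InnerProductGeometry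
open scoped RealInnerProductSpace

noncomputable section

theorem Real.sign_mul_of_pos {k : ℝ} (hk : 0 < k) (t : ℝ) :
    Real.sign (k * t) = Real.sign t := by
  rcases lt_trichotomy t 0 with h | rfl | h
  · rw [sign_of_neg h, sign_of_neg (mul_neg_of_pos_of_neg hk h)]
  · simp
  · rw [sign_of_pos h, sign_of_pos (mul_pos hk h)]

theorem Real.measurable_sign : Measurable Real.sign :=
  Measurable.ite measurableSet_Iio measurable_const
    (Measurable.ite measurableSet_Ioi measurable_const measurable_const)

theorem Real.sign_cos_eq_one_of_mem_Ioo {u : ℝ} (hu : u ∈ Ioo (-(π / 2)) (π / 2)) :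
    Real.sign (cos u) = 1 :=
  sign_of_pos (cos_pos_of_mem_Ioo hu)

theorem Real.sign_cos_eq_neg_one_of_mem_Ioo {u : ℝ} (hu : u ∈ Ioo (π / 2) (π + π / 2)) :
    Real.sign (cos u) = -1 :=
  sign_of_neg (cos_neg_of_pi_div_two_lt_of_lt hu.1 hu.2)

theorem isAddLeftInvariant_eq_inv_measure_univ_smul {G : Type*} [AddGroup G]
    [TopologicalSpace G] [IsTopologicalAddGroup G] [CompactSpace G] [MeasurableSpace G]
    [BorelSpace G] (μ ν : Measure G) [μ.IsAddHaarMeasure] [IsProbabilityMeasure ν]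
    [ν.IsAddLeftInvariant] :
    ν = (μ univ)⁻¹ • μ := by
  have hν : ∀ s, ν s = addHaarScalarFactor ν μ * μ s := fun s => by
    conv_lhs => rw [isAddInvariant_eq_smul_of_compactSpace ν μ]
    rfl
  have hc : (addHaarScalarFactor ν μ : ENNReal) = (μ univ)⁻¹ :=
    ENNReal.eq_inv_of_mul_eq_one_left (by rw [← hν, measure_univ])
  ext s
  rw [hν, hc, Measure.smul_apply, smul_eq_mul]

theorem Real.volume_Ioc_inter_setOf_sign_cos_eq_sign_cos_sub {θ : ℝ} (hθ₀ : 0 ≤ θ)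
    (hθπ : θ ≤ π) :
    volume (Ioc (-(π / 2)) (-(π / 2) + 2 * π) ∩ {φ | Real.sign (cos φ) = Real.sign (cos (φ - θ))})
      = ENNReal.ofReal (2 * π - 2 * θ) := by
  set I := Ioc (-(π / 2)) (-(π / 2) + 2 * π)
  -- On `U` the two cosines have the same sign, on `V` opposite signs.
  set U := Ioo (θ - π / 2) (π / 2) ∪ Ioo (θ + π / 2) (-(π / 2) + 2 * π)
  set V := Ioo (-(π / 2)) (θ - π / 2) ∪ Ioo (π / 2) (θ + π / 2)
  have hUS : U ⊆ I ∩ {φ | Real.sign (cos φ) = Real.sign (cos (φ - θ))} := by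
    rintro φ (⟨hl, hr⟩ | ⟨hl, hr⟩) <;> refine ⟨by constructor <;> linarith, ?_⟩
    · rw [mem_ofPred_eq, sign_cos_eq_one_of_mem_Ioo ⟨by linarith, hr⟩,
        sign_cos_eq_one_of_mem_Ioo ⟨by linarith, by linarith⟩]
    · rw [mem_ofPred_eq, sign_cos_eq_neg_one_of_mem_Ioo ⟨by linarith, by linarith⟩,
        sign_cos_eq_neg_one_of_mem_Ioo ⟨by linarith, by linarith⟩]
  have hSV : I ∩ {φ | Real.sign (cos φ) = Real.sign (cos (φ - θ))} ⊆ I \ V := by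
    rintro φ ⟨hφI, hφ⟩
    refine ⟨hφI, ?_⟩
    rintro (⟨hl, hr⟩ | ⟨hl, hr⟩)
    · rw [mem_ofPred_eq, sign_cos_eq_one_of_mem_Ioo ⟨hl, by linarith⟩, ← cos_neg,
        sign_cos_eq_neg_one_of_mem_Ioo ⟨by linarith, by linarith⟩] at hφ
      norm_num at hφ
    · rw [mem_ofPred_eq, sign_cos_eq_neg_one_of_mem_Ioo ⟨hl, by linarith⟩,
        sign_cos_eq_one_of_mem_Ioo ⟨by linarith, by linarith⟩] at hφ
      norm_num at hφ
  have hdisj {a b c d : ℝ} (h : b ≤ c) : Disjoint (Ioo a b) (Ioo c d) :=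
    Ioo_disjoint_Ioo.2 (min_le_of_left_le (le_max_of_le_right h))
  have hU : volume U = ENNReal.ofReal (2 * π - 2 * θ) := by
    rw [measure_union (hdisj (by linarith)) measurableSet_Ioo, volume_Ioo, volume_Ioo,
      ← ENNReal.ofReal_add (by linarith) (by linarith)]
    ring_nf
  have hV : volume (I \ V) = ENNReal.ofReal (2 * π - 2 * θ) := by
    have hVI : V ⊆ I := union_subset
      (Ioo_subset_Ioc_self.trans (Ioc_subset_Ioc le_rfl (by linarith)))
      (Ioo_subset_Ioc_self.trans (Ioc_subset_Ioc (by linarith) (by linarith)))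
    rw [measure_sdiff hVI (measurableSet_Ioo.union measurableSet_Ioo).nullMeasurableSet
        (measure_ne_top_of_subset hVI measure_Ioc_lt_top.ne),
      measure_union (hdisj (by linarith)) measurableSet_Ioo, volume_Ioc, volume_Ioo, volume_Ioo,
      ← ENNReal.ofReal_add (by linarith) (by linarith), ← ENNReal.ofReal_sub _ (by linarith)]
    ring_nf
  exact le_antisymm (hV ▸ measure_mono hSV) (hU ▸ measure_mono hUS)

instance : Fact (0 < 2 * π) := ⟨two_pi_pos⟩

namespace Real.Angle

-- `Angle` is `AddCircle (2 * π)`, but does not inherit its measure-theoretic instances.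
instance : MeasureSpace Angle := inferInstanceAs (MeasureSpace (AddCircle (2 * π)))
instance : BorelSpace Angle := inferInstanceAs (BorelSpace (AddCircle (2 * π)))
instance : CompactSpace Angle := inferInstanceAs (CompactSpace (AddCircle (2 * π)))
instance : (volume : Measure Angle).IsAddHaarMeasure :=
  inferInstanceAs (volume : Measure (AddCircle (2 * π))).IsAddHaarMeasure

theorem volume_univ : volume (univ : Set Angle) = ENNReal.ofReal (2 * π) :=
  AddCircle.measure_univ (2 * π)

theorem measurableSet_setOf_sign_cos_eq_sign_cos_sub (θ : ℝ) :
    MeasurableSet {ψ : Angle | Real.sign (cos ψ) = Real.sign (cos (ψ - θ))} :=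
  measurableSet_eq_fun (measurable_sign.comp continuous_cos.measurable)
    (measurable_sign.comp (continuous_cos.measurable.comp (measurable_id.sub_const _)))

theorem volume_setOf_sign_cos_eq_sign_cos_sub {θ : ℝ} (hθ₀ : 0 ≤ θ) (hθπ : θ ≤ π) :
    volume {ψ : Angle | Real.sign (cos ψ) = Real.sign (cos (ψ - θ))}
      = ENNReal.ofReal (2 * π - 2 * θ) := by
  refine (AddCircle.add_projection_respects_measure (2 * π) (-(π / 2))
    (measurableSet_setOf_sign_cos_eq_sign_cos_sub θ)).trans ?_
  rw [inter_comm, ← volume_Ioc_inter_setOf_sign_cos_eq_sign_cos_sub hθ₀ hθπ]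
  rfl

end Real.Angle

theorem Complex.coe_arg_cos_add_sin_mul_I_mul (α : ℝ) {z : ℂ} (hz : z ≠ 0) :
    (arg ((Real.cos α + Real.sin α * I) * z) : Real.Angle) = α + arg z := by
  have hα : (Real.cos α + Real.sin α * I : ℂ) = exp (α * I) := by
    rw [ofReal_cos, ofReal_sin, exp_mul_I]
  rw [arg_mul_coe_angle (hα ▸ exp_ne_zero _) hz, ← Real.Angle.cos_coe, ← Real.Angle.sin_coe,
    arg_cos_add_sin_mul_I_coe_angle]

section PlaneRotation

variable {E : Type*} [NormedAddCommGroup E] [InnerProductSpace ℝ E] {e₁ e₂ : E}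

def planeCoord (e₁ e₂ v : E) : ℂ := ⟨⟪v, e₁⟫, ⟪v, e₂⟫⟩

theorem continuous_planeCoord (e₁ e₂ : E) : Continuous (planeCoord e₁ e₂) :=
  Complex.equivRealProdCLM.symm.continuous.comp (f := fun v => (⟪v, e₁⟫, ⟪v, e₂⟫))
    (by fun_prop)

def planeRotation (e₁ e₂ : E) (α : ℝ) : E →ₗ[ℝ] E where
  toFun v := v + ((cos α - 1) * ⟪v, e₁⟫ - sin α * ⟪v, e₂⟫) • e₁
      + (sin α * ⟪v, e₁⟫ + (cos α - 1) * ⟪v, e₂⟫) • e₂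
  map_add' u v := by
    simp only [inner_add_left]
    module
  map_smul' r v := by
    simp only [real_inner_smul_left, RingHom.id_apply]
    module

variable (h₁ : ⟪e₁, e₁⟫ = 1) (h₂ : ⟪e₂, e₂⟫ = 1) (h₁₂ : ⟪e₁, e₂⟫ = 0)
include h₁ h₂ h₁₂

theorem planeCoord_planeRotation (α : ℝ) (v : E) :
    planeCoord e₁ e₂ (planeRotation e₁ e₂ α v)
      = (cos α + sin α * Complex.I) * planeCoord e₁ e₂ v := by
  have h₂₁ : ⟪e₂, e₁⟫ = 0 := by rw [real_inner_comm, h₁₂]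
  apply Complex.ext <;>
  simp only [planeCoord, planeRotation, LinearMap.coe_mk, AddHom.coe_mk, inner_add_left,
    real_inner_smul_left, h₁, h₂, h₁₂, h₂₁, Complex.mul_re, Complex.mul_im, Complex.add_re,
    Complex.add_im, Complex.ofReal_re, Complex.ofReal_im, Complex.I_re, Complex.I_im] <;>
  ring

theorem norm_planeRotation (α : ℝ) (v : E) : ‖planeRotation e₁ e₂ α v‖ = ‖v‖ := by
  have h₂₁ : ⟪e₂, e₁⟫ = 0 := by rw [real_inner_comm, h₁₂]
  rw [norm_eq_sqrt_real_inner, norm_eq_sqrt_real_inner]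
  congr 1
  simp only [planeRotation, LinearMap.coe_mk, AddHom.coe_mk, inner_add_left, inner_add_right,
    real_inner_smul_left, real_inner_smul_right, h₁, h₂, h₁₂, h₂₁, real_inner_comm v e₁,
    real_inner_comm v e₂]
  linear_combination (⟪v, e₁⟫ ^ 2 + ⟪v, e₂⟫ ^ 2) * sin_sq_add_cos_sq α

theorem exists_linearIsometryEquiv_planeCoord_eq_mul [FiniteDimensional ℝ E] (α : ℝ) :
    ∃ O : E ≃ₗᵢ[ℝ] E, ∀ v,
      planeCoord e₁ e₂ (O v) = (cos α + sin α * Complex.I) * planeCoord e₁ e₂ v :=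
  ⟨LinearIsometry.toLinearIsometryEquiv
      ⟨planeRotation e₁ e₂ α, norm_planeRotation h₁ h₂ h₁₂ α⟩ rfl,
    planeCoord_planeRotation h₁ h₂ h₁₂ α⟩

end PlaneRotation

section PlaneAngle

variable {E : Type*} [NormedAddCommGroup E] [InnerProductSpace ℝ E] [MeasurableSpace E]
  [BorelSpace E] {e₁ e₂ : E}

def planeAngle (e₁ e₂ v : E) : Real.Angle := (planeCoord e₁ e₂ v).arg

theorem measurable_planeAngle (e₁ e₂ : E) : Measurable (planeAngle e₁ e₂) :=
  Real.Angle.continuous_coe.measurable.comp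
    (Complex.measurable_arg.comp (continuous_planeCoord e₁ e₂).measurable)

variable [FiniteDimensional ℝ E] (μ : Measure E) [IsProbabilityMeasure μ]
  (hrot : ∀ O : E ≃ₗᵢ[ℝ] E, μ.map O = μ)
  (h₁ : ⟪e₁, e₁⟫ = 1) (h₂ : ⟪e₂, e₂⟫ = 1) (h₁₂ : ⟪e₁, e₂⟫ = 0)
include hrot h₁ h₂ h₁₂

theorem map_planeAngle_eq_smul_volume (h₀ : ∀ᵐ v ∂μ, planeCoord e₁ e₂ v ≠ 0) :
    μ.map (planeAngle e₁ e₂) = (ENNReal.ofReal (2 * π))⁻¹ • volume := by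
  have hΦ := measurable_planeAngle e₁ e₂
  have := isProbabilityMeasure_map (μ := μ) hΦ.aemeasurable
  have : (μ.map (planeAngle e₁ e₂)).IsAddLeftInvariant := by
    refine ⟨fun g => ?_⟩
    induction g using Real.Angle.induction_on with | _ α => ?_
    obtain ⟨O, hO⟩ := exists_linearIsometryEquiv_planeCoord_eq_mul h₁ h₂ h₁₂ α
    have hrotate :
        (fun v => (α : Real.Angle) + planeAngle e₁ e₂ v) =ᵐ[μ] planeAngle e₁ e₂ ∘ O := by
      filter_upwards [h₀] with v hv
      simp only [Function.comp_apply, planeAngle, hO, Complex.coe_arg_cos_add_sin_mul_I_mul α hv]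
    calc (μ.map (planeAngle e₁ e₂)).map (fun ψ => (α : Real.Angle) + ψ)
        = μ.map (fun v => (α : Real.Angle) + planeAngle e₁ e₂ v) :=
          map_map (measurable_const_add _) hΦ
      _ = (μ.map O).map (planeAngle e₁ e₂) := by
          rw [map_congr hrotate, map_map hΦ O.continuous.measurable]
      _ = μ.map (planeAngle e₁ e₂) := by rw [hrot]
  rw [isAddLeftInvariant_eq_inv_measure_univ_smul volume (μ.map _), Real.Angle.volume_univ]

theorem measure_sign_inner_eq_sign_inner_cos_smul_add_sin_smul
    (hμ : μ {v | ⟪v, e₁⟫ = 0} = 0) {θ : ℝ} (hθ₀ : 0 ≤ θ) (hθπ : θ ≤ π) :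
    μ {v | Real.sign ⟪v, e₁⟫ = Real.sign ⟪v, cos θ • e₁ + sin θ • e₂⟫}
      = ENNReal.ofReal (1 - θ / π) := by
  have h₀ : ∀ᵐ v ∂μ, planeCoord e₁ e₂ v ≠ 0 :=
    measure_mono_null (fun v hv => congrArg Complex.re (not_not.1 hv)) hμ
  set S := {ψ : Real.Angle | Real.sign (Real.Angle.cos ψ) = Real.sign (Real.Angle.cos (ψ - θ))}
  have hpre : {v | Real.sign ⟪v, e₁⟫ = Real.sign ⟪v, cos θ • e₁ + sin θ • e₂⟫}
      =ᵐ[μ] planeAngle e₁ e₂ ⁻¹' S := by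
    refine Filter.eventuallyEq_set.2 ?_
    filter_upwards [h₀] with v hv
    simp only [S, mem_ofPred_eq, mem_preimage, planeAngle, ← Real.Angle.coe_sub,
      Real.Angle.cos_coe]
    set z := planeCoord e₁ e₂ v
    have hz : 0 < ‖z‖ := norm_pos_iff.2 hv
    have hre : ⟪v, e₁⟫ = ‖z‖ * cos (Complex.arg z) := (Complex.norm_mul_cos_arg z).symm
    have him : ⟪v, cos θ • e₁ + sin θ • e₂⟫ = ‖z‖ * cos (Complex.arg z - θ) := by
      rw [inner_add_right, real_inner_smul_right, real_inner_smul_right, cos_sub, mul_add,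
        ← mul_assoc, ← mul_assoc, Complex.norm_mul_cos_arg, Complex.norm_mul_sin_arg]
      simp only [z, planeCoord]
      ring
    rw [hre, him, sign_mul_of_pos hz, sign_mul_of_pos hz]
  rw [measure_congr hpre,
    ← map_apply (measurable_planeAngle e₁ e₂)
      (Real.Angle.measurableSet_setOf_sign_cos_eq_sign_cos_sub θ),
    map_planeAngle_eq_smul_volume μ hrot h₁ h₂ h₁₂ h₀, Measure.smul_apply, smul_eq_mul,
    Real.Angle.volume_setOf_sign_cos_eq_sign_cos_sub hθ₀ hθπ,
    ← ENNReal.ofReal_inv_of_pos two_pi_pos, ← ENNReal.ofReal_mul (by positivity)]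
  congr 1
  field_simp

end PlaneAngle

theorem exists_orthonormal_pair_of_forall_ne_smul {E : Type*} [NormedAddCommGroup E]
    [InnerProductSpace ℝ E] {x y : E} (hx : x ≠ 0) (hxy : ∀ t : ℝ, y ≠ t • x) :
    ∃ e₁ e₂ : E, ⟪e₁, e₁⟫ = 1 ∧ ⟪e₂, e₂⟫ = 1 ∧ ⟪e₁, e₂⟫ = 0 ∧ x = ‖x‖ • e₁ ∧
      y = ‖y‖ • (cos (angle x y) • e₁ + sin (angle x y) • e₂) := by
  have hx' : 0 < ‖x‖ := norm_pos_iff.2 hx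
  set e₁ := ‖x‖⁻¹ • x
  have h₁ : ⟪e₁, e₁⟫ = 1 := by
    rw [real_inner_smul_left, real_inner_smul_right, real_inner_self_eq_norm_mul_norm]
    field_simp
  set w := y - ⟪e₁, y⟫ • e₁
  have hw : w ≠ 0 := fun h => hxy (⟪e₁, y⟫ * ‖x‖⁻¹) (by rw [mul_smul, ← sub_eq_zero, ← h])
  have h₁w : ⟪e₁, w⟫ = 0 := by
    simp only [w, inner_sub_right, real_inner_smul_right, h₁, mul_one, sub_self]
  have hcos : ‖y‖ * cos (angle x y) = ⟪e₁, y⟫ := by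
    rw [cos_angle, real_inner_smul_left]
    have hy : y ≠ 0 := by simpa using hxy 0
    field_simp
  have hww : ⟪w, w⟫ = ⟪y, y⟫ - ⟪e₁, y⟫ ^ 2 := by
    simp only [w, inner_sub_left, inner_sub_right, real_inner_smul_left, real_inner_smul_right,
      h₁, real_inner_comm e₁ y]
    ring
  have hsin : ‖y‖ * sin (angle x y) = ‖w‖ := by
    refine (sq_eq_sq₀ (mul_nonneg (norm_nonneg y) (sin_angle_nonneg x y)) (norm_nonneg w)).1 ?_
    rw [← real_inner_self_eq_norm_sq w, hww, real_inner_self_eq_norm_sq, ← hcos]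
    linear_combination ‖y‖ ^ 2 * sin_sq_add_cos_sq (angle x y)
  have hw' : 0 < ‖w‖ := norm_pos_iff.2 hw
  refine ⟨e₁, ‖w‖⁻¹ • w, h₁, ?_, ?_, ?_, ?_⟩
  · rw [real_inner_smul_left, real_inner_smul_right, real_inner_self_eq_norm_mul_norm]
    field_simp
  · rw [real_inner_smul_right, h₁w, mul_zero]
  · rw [smul_smul, mul_inv_cancel₀ hx'.ne', one_smul]
  · rw [smul_add, smul_smul ‖y‖ (cos _), smul_smul ‖y‖ (sin _), hcos, hsin,
      smul_inv_smul₀ hw'.ne']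
    exact (add_sub_cancel _ y).symm

theorem sign_projection_collision_general (n : ℕ)
    (μ : MeasureTheory.Measure (EuclideanSpace ℝ (Fin n)))
    [MeasureTheory.IsProbabilityMeasure μ]
    (hrot : ∀ O : EuclideanSpace ℝ (Fin n) ≃ₗᵢ[ℝ] EuclideanSpace ℝ (Fin n),
      μ.map O = μ)
    (x y : EuclideanSpace ℝ (Fin n)) (hx : x ≠ 0) (hy : y ≠ 0)
    (hopp : ¬∃ t : ℝ, t < 0 ∧ y = t • x)
    (hμx : μ {v | (inner ℝ v x : ℝ) = 0} = 0) :
    μ {v | Real.sign (inner ℝ v x : ℝ) = Real.sign (inner ℝ v y : ℝ)}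
      = ENNReal.ofReal
          (1 - Real.arccos ((inner ℝ x y : ℝ) / (‖x‖ * ‖y‖)) / Real.pi) := by
  change _ = ENNReal.ofReal (1 - angle x y / π)
  by_cases hcol : ∃ t : ℝ, y = t • x
  · obtain ⟨t, rfl⟩ := hcol
    have ht : 0 < t := (not_lt.1 fun h => hopp ⟨t, h, rfl⟩).lt_of_ne (by rintro rfl; simp at hy)
    have hall : {v | Real.sign ⟪v, x⟫ = Real.sign ⟪v, t • x⟫} = univ :=
      eq_univ_of_forall fun v => by simp [real_inner_smul_right, sign_mul_of_pos ht]
    rw [hall, measure_univ, angle_smul_right_of_pos _ _ ht, angle_self hx]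
    simp
  push Not at hcol
  obtain ⟨e₁, e₂, h₁, h₂, h₁₂, hxe, hye⟩ := exists_orthonormal_pair_of_forall_ne_smul hx hcol
  have hx' (v) : ⟪v, x⟫ = ‖x‖ * ⟪v, e₁⟫ :=
    (congrArg (⟪v, ·⟫) hxe).trans (real_inner_smul_right _ _ _)
  have hy' (v) : ⟪v, y⟫ = ‖y‖ * ⟪v, cos (angle x y) • e₁ + sin (angle x y) • e₂⟫ :=
    (congrArg (⟪v, ·⟫) hye).trans (real_inner_smul_right _ _ _)
  have hμe₁ : μ {v | ⟪v, e₁⟫ = 0} = 0 := by simpa [hx', hx] using hμx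
  simp only [hx', hy', sign_mul_of_pos (norm_pos_iff.2 hx), sign_mul_of_pos (norm_pos_iff.2 hy)]
  exact measure_sign_inner_eq_sign_inner_cos_smul_add_sin_smul μ hrot h₁ h₂ h₁₂ hμe₁
    (angle_nonneg x y) (angle_le_pi x y)

/-- Sign-projection collision probability: for `v` drawn from a rotationally
invariant distribution, `P[sign⟨v,x⟩ = sign⟨v,y⟩] = 1 - θ(x,y)/π`. -/
theorem sign_projection_collision (n : ℕ)
    (μ : MeasureTheory.Measure (EuclideanSpace ℝ (Fin n)))
    [MeasureTheory.IsProbabilityMeasure μ]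
    (hrot : ∀ O : EuclideanSpace ℝ (Fin n) ≃ₗᵢ[ℝ] EuclideanSpace ℝ (Fin n),
      μ.map O = μ)
    (x y : EuclideanSpace ℝ (Fin n)) (hx : x ≠ 0) (hy : y ≠ 0)
    (hopp : ¬∃ t : ℝ, t < 0 ∧ y = t • x)
    (hμx : μ {v | (inner ℝ v x : ℝ) = 0} = 0)
    (hμy : μ {v | (inner ℝ v y : ℝ) = 0} = 0) :
    μ {v | Real.sign (inner ℝ v x : ℝ) = Real.sign (inner ℝ v y : ℝ)}
      = ENNReal.ofReal
          (1 - Real.arccos ((inner ℝ x y : ℝ) / (‖x‖ * ‖y‖)) / Real.pi) :=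
  sign_projection_collision_general n μ hrot x y hx hy hopp hμx
end
end
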